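/- arXiv:1703.08887 — 3 statements merged into one kernel-verified Lean document; each statement's English description precedes it below -/
import Mathlib

section
/- Mean comparison inequality: Under the Banach-space product setting with a twice Fréchet differentiable functional f satisfying ‖f_{ii}(x)‖ ≤ c_{ii} on W and diameter bound M on each W_i, for every product probability measure ν = ν_1×…×ν_n supported on W one has ∫_W ( f(x) − f(m(ν)) ) dν(x) ≥ −(M²/2) Σ_{i=1}^n c_{ii}. -/
/-!
Write `f x - f m` as the telescoping sum of the increments `f (h (i+1)) - f (h i)` along the
hybrid points `h k`, which agree with `x` in the coordinates `< k` and with `m` elsewhere. The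
`i`-th increment moves only coordinate `i`, along a segment inside `W`, so the second-order Taylor
bound gives `f (h (i+1)) - f (h i) ≥ f_i(h i) (x i - m i) - c i i * M ^ 2 / 2`. As `h i` does not
depend on `x i`, integrating the linear term first in `x i` gives `f_i(h i) (m i - m i) = 0`.

The integrals are computed on the product of the compact subtypes `W i`: the `V i` need not be
separable, so a continuous function on `∀ i, V i` need not be measurable for the product
σ-algebra, whereas on `∀ i, W i` it is.
-/

open MeasureTheory Real

/-- The `i`-th coordinate inclusion as a continuous linear map. -/
noncomputable def coordL {n : ℕ} (V : Fin n → Type*) [∀ i, NormedAddCommGroup (V i)]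
    [∀ i, NormedSpace ℝ (V i)] (i : Fin n) : V i →L[ℝ] (∀ j, V j) :=
  { LinearMap.single ℝ V i with cont := continuous_single i }

/-- Partial Fréchet differential `f_i(x) : V_i → ℝ`. -/
noncomputable def partialD {n : ℕ} {V : Fin n → Type*} [∀ i, NormedAddCommGroup (V i)]
    [∀ i, NormedSpace ℝ (V i)] (f : (∀ j, V j) → ℝ) (x : ∀ j, V j) (i : Fin n) :
    V i →L[ℝ] ℝ :=
  (fderiv ℝ f x).comp (coordL V i)

theorem Continuous.integrable_of_compactSpace {X E : Type*} [TopologicalSpace X] [CompactSpace X]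
    [MeasurableSpace X] [OpensMeasurableSpace X] {μ : Measure X} [IsFiniteMeasure μ]
    [NormedAddCommGroup E] {g : X → E} (hg : Continuous g) : Integrable g μ :=
  hg.integrable_of_hasCompactSupport (.of_compactSpace g)

theorem deriv_sub_half_le_sub_of_abs_deriv2_le {g g' g'' : ℝ → ℝ} {K : ℝ}
    (hg : ∀ t ∈ Set.Icc (0 : ℝ) 1, HasDerivAt g (g' t) t)
    (hg' : ∀ t ∈ Set.Icc (0 : ℝ) 1, HasDerivAt g' (g'' t) t)
    (hK : ∀ t ∈ Set.Icc (0 : ℝ) 1, |g'' t| ≤ K) :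
    g' 0 - K / 2 ≤ g 1 - g 0 := by
  have hg'_ge : ∀ t ∈ Set.Icc (0 : ℝ) 1, g' 0 - K * t ≤ g' t := by
    intro t ht
    have := (convex_Icc (0 : ℝ) 1).norm_image_sub_le_of_norm_hasDerivWithin_le
      (fun s hs => (hg' s hs).hasDerivWithinAt) hK (Set.left_mem_Icc.2 zero_le_one) ht
    rw [Real.norm_eq_abs, Real.norm_eq_abs, sub_zero, abs_of_nonneg ht.1] at this
    linarith [neg_abs_le (g' t - g' 0)]
  have hg'_cont : ContinuousOn g' (Set.Icc 0 1) := fun t ht =>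
    (hg' t ht).continuousAt.continuousWithinAt
  have hlin : Continuous fun t : ℝ => g' 0 - K * t := by fun_prop
  calc g' 0 - K / 2 = ∫ t in (0 : ℝ)..1, (g' 0 - K * t) := by
        rw [intervalIntegral.integral_sub intervalIntegrable_const
          ((continuous_const_mul K).intervalIntegrable 0 1),
          intervalIntegral.integral_const_mul, intervalIntegral.integral_const, integral_id]
        ring
    _ ≤ ∫ t in (0 : ℝ)..1, g' t :=
        intervalIntegral.integral_mono_on zero_le_one (hlin.intervalIntegrable 0 1)
          (hg'_cont.intervalIntegrable_of_Icc zero_le_one) hg'_ge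
    _ = g 1 - g 0 :=
        intervalIntegral.integral_eq_sub_of_hasDerivAt
          (fun t ht => hg t (by rwa [Set.uIcc_of_le zero_le_one] at ht))
          (hg'_cont.intervalIntegrable_of_Icc zero_le_one)

theorem fderiv_sub_half_le_sub_of_abs_fderiv2_le {E : Type*} [NormedAddCommGroup E]
    [NormedSpace ℝ E] {f : E → ℝ} (hf : Differentiable ℝ f) (hf' : Differentiable ℝ (fderiv ℝ f))
    {x v : E} {K : ℝ}
    (hK : ∀ t ∈ Set.Icc (0 : ℝ) 1, |fderiv ℝ (fun y => fderiv ℝ f y v) (x + t • v) v| ≤ K) :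
    fderiv ℝ f x v - K / 2 ≤ f (x + v) - f x := by
  have hline : ∀ t : ℝ, HasDerivAt (fun t : ℝ => x + t • v) v t := fun t => by
    simpa using ((hasDerivAt_id t).smul_const v).const_add x
  have hdir : Differentiable ℝ fun y => fderiv ℝ f y v := hf'.clm_apply (differentiable_const v)
  simpa using deriv_sub_half_le_sub_of_abs_deriv2_le
    (g := fun t => f (x + t • v)) (g' := fun t => fderiv ℝ f (x + t • v) v)
    (fun t _ => (hf _).hasFDerivAt.comp_hasDerivAt t (hline t))
    (fun t _ => (hdir _).hasFDerivAt.comp_hasDerivAt t (hline t)) hK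

section Hybrid

variable {n : ℕ} {α : Fin n → Type*}

def hybrid (x m : ∀ j, α j) (k : ℕ) : ∀ j, α j :=
  fun j => if (j : ℕ) < k then x j else m j

variable {x m : ∀ j, α j} {k : ℕ}

@[simp] theorem hybrid_zero : hybrid x m 0 = m :=
  funext fun _ => if_neg (Nat.not_lt_zero _)

theorem hybrid_of_le (hk : n ≤ k) : hybrid x m k = x :=
  funext fun j => if_pos (j.isLt.trans_le hk)

theorem hybrid_congr {y : ∀ j, α j} (h : ∀ j : Fin n, (j : ℕ) < k → x j = y j) :
    hybrid x m k = hybrid y m k := by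
  funext j
  by_cases hj : (j : ℕ) < k <;> simp [hybrid, hj, h j]

theorem hybrid_mem_pi {s : ∀ j, Set (α j)} (hx : x ∈ Set.univ.pi s) (hm : m ∈ Set.univ.pi s) :
    hybrid x m k ∈ Set.univ.pi s := by
  intro j _
  by_cases hj : (j : ℕ) < k
  · simpa [hybrid, hj] using hx j trivial
  · simpa [hybrid, hj] using hm j trivial

theorem continuous_hybrid [∀ j, TopologicalSpace (α j)] :
    Continuous fun x : ∀ j, α j => hybrid x m k :=
  continuous_pi fun j => by
    by_cases hj : (j : ℕ) < k
    · simpa [hybrid, hj] using continuous_apply j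
    · simpa [hybrid, hj] using continuous_const

theorem continuous_hybrid_subtype_val [∀ j, TopologicalSpace (α j)] {s : ∀ j, Set (α j)} :
    Continuous fun w : ∀ j, s j => hybrid (fun j => (w j : α j)) m k :=
  continuous_hybrid.comp (continuous_pi fun j => continuous_subtype_val.comp (continuous_apply j))

theorem hybrid_succ [∀ j, AddCommGroup (α j)] (i : Fin n) :
    hybrid x m (i + 1) = hybrid x m i + Pi.single i (x i - m i) := by
  funext j
  rcases lt_trichotomy (j : ℕ) i with hj | hj | hj
  · simp [hybrid, hj, Fin.ne_of_lt hj, Nat.lt_succ_of_lt hj]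
  · obtain rfl := Fin.ext hj
    simp [hybrid]
  · simp [hybrid, Fin.ne_of_gt hj, hj.not_gt, (Nat.succ_le_of_lt hj).not_gt]

theorem sub_eq_sum_hybrid_succ_sub {G : Type*} [AddCommGroup G] (F : (∀ j, α j) → G) :
    F x - F m = ∑ i : Fin n, (F (hybrid x m (i + 1)) - F (hybrid x m i)) := by
  rw [Fin.sum_univ_eq_sum_range (fun k => F (hybrid x m (k + 1)) - F (hybrid x m k)),
    Finset.sum_range_sub (fun k => F (hybrid x m k)), hybrid_zero, hybrid_of_le le_rfl]

end Hybrid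

theorem integral_pi_clm_apply_eq_zero {n : ℕ} {α : Fin n → Type*} [∀ j, MeasurableSpace (α j)]
    {μ : ∀ j, Measure (α j)} [∀ j, IsProbabilityMeasure (μ j)] {i : Fin n}
    {E F : Type*} [NormedAddCommGroup E] [NormedSpace ℝ E] [CompleteSpace E]
    [NormedAddCommGroup F] [NormedSpace ℝ F] [CompleteSpace F]
    {T : (∀ j, α j) → E →L[ℝ] F} (hT : ∀ x a, T (Function.update x i a) = T x)
    {φ : α i → E} (hφ : Integrable φ (μ i)) (hφ0 : ∫ a, φ a ∂μ i = 0)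
    (hint : Integrable (fun x => T x (φ (x i))) (Measure.pi μ)) :
    ∫ x, T x (φ (x i)) ∂Measure.pi μ = 0 := by
  obtain ⟨n, rfl⟩ := Nat.exists_eq_add_one_of_ne_zero i.pos.ne'
  obtain ⟨a₀⟩ := nonempty_of_isProbabilityMeasure (μ i)
  set G : α i × (∀ j, α (i.succAbove j)) → F := fun p => T (i.insertNth p.1 p.2) (φ p.1)
  have hG : ∀ x, G (MeasurableEquiv.piFinSuccAbove α i x) = T x (φ (x i)) := fun x => by
    simp [G, MeasurableEquiv.piFinSuccAbove_apply]
  have hmp := measurePreserving_piFinSuccAbove μ i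
  have hGint : Integrable G ((μ i).prod (Measure.pi fun j => μ (i.succAbove j))) := by
    rw [← hmp.integrable_comp_emb (MeasurableEquiv.measurableEmbedding _)]
    exact (funext hG : G ∘ _ = _) ▸ hint
  have hinner : ∀ r, ∫ a, G (a, r) ∂μ i = 0 := fun r => by
    have hTr : ∀ a, T (i.insertNth a r) = T (i.insertNth a₀ r) := fun a => by
      simpa using hT (i.insertNth a₀ r) a
    simp only [G, hTr]
    rw [(T (i.insertNth a₀ r)).integral_comp_comm hφ, hφ0, map_zero]
  simp_rw [← hG]
  rw [hmp.integral_comp', integral_prod_symm G hGint]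
  simp [hinner]

theorem integral_pi_eq_integral_pi_comap_subtype {ι : Type*} [Fintype ι] {V : ι → Type*}
    [∀ i, MeasurableSpace (V i)] {ν : ∀ i, Measure (V i)} [∀ i, SigmaFinite (ν i)]
    {W : ∀ i, Set (V i)} (hW : ∀ i, MeasurableSet (W i)) (hνW : ∀ i, ∀ᵐ z ∂ν i, z ∈ W i)
    {E : Type*} [NormedAddCommGroup E] [NormedSpace ℝ E] (g : (∀ i, V i) → E) :
    ∫ x, g x ∂Measure.pi ν =
      ∫ w : ∀ i, W i, g (fun i => w i) ∂Measure.pi fun i => (ν i).comap (↑) := by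
  have hmp : MeasurePreserving (fun (w : ∀ i, W i) i => (w i : V i))
      (Measure.pi fun i => (ν i).comap (↑)) (Measure.pi ν) :=
    measurePreserving_pi _ _ fun i => by
      simpa only [Measure.restrict_eq_self_of_ae_mem (hνW i)] using
        measurePreserving_subtype_coe (μa := ν i) (hW i)
  have hemb : MeasurableEmbedding fun (w : ∀ i, W i) i => (w i : V i) :=
    (MeasurableEmbedding.subtype_coe (s := {x : ∀ i, V i | ∀ i, x i ∈ W i})
      (by convert MeasurableSet.univ_pi hW; ext; simp)).comp
      MeasurableEquiv.subtypePiEquivPi.symm.measurableEmbedding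
  exact (hmp.integral_comp hemb g).symm

section Coordinate

variable {n : ℕ} {V : Fin n → Type*} [∀ j, NormedAddCommGroup (V j)] [∀ j, NormedSpace ℝ (V j)]
  {W : ∀ j, Set (V j)} {f : (∀ j, V j) → ℝ} {i : Fin n} {C M : ℝ} {m : ∀ j, V j}

theorem fderiv_hybrid_sub_half_le_hybrid_succ_sub (hf : Differentiable ℝ f)
    (hf' : Differentiable ℝ (fderiv ℝ f)) (hW : ∀ j, Convex ℝ (W j)) (hC0 : 0 ≤ C)
    (hC : ∀ y ∈ Set.univ.pi W, ∀ z : V i,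
      |fderiv ℝ (fun y => fderiv ℝ f y (Pi.single i z)) y (Pi.single i z)| ≤ C * ‖z‖ * ‖z‖)
    (hM : ∀ z ∈ W i, ∀ z' ∈ W i, ‖z - z'‖ ≤ M) {x : ∀ j, V j} (hx : x ∈ Set.univ.pi W)
    (hm : m ∈ Set.univ.pi W) :
    fderiv ℝ f (hybrid x m i) (Pi.single i (x i - m i)) - C * M ^ 2 / 2 ≤
      f (hybrid x m (i + 1)) - f (hybrid x m i) := by
  have hseg : ∀ t ∈ Set.Icc (0 : ℝ) 1,
      hybrid x m i + t • Pi.single i (x i - m i) ∈ Set.univ.pi W := fun t ht => by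
    simpa [hybrid_succ] using (convex_pi fun j _ => hW j).add_smul_sub_mem
      (hybrid_mem_pi (k := i) hx hm) (hybrid_mem_pi (k := i + 1) hx hm) ht
  have hδ : ‖x i - m i‖ ≤ M := hM _ (hx i trivial) _ (hm i trivial)
  rw [hybrid_succ]
  refine fderiv_sub_half_le_sub_of_abs_fderiv2_le hf hf' fun t ht =>
    (hC _ (hseg t ht) _).trans ?_
  calc C * ‖x i - m i‖ * ‖x i - m i‖ = C * ‖x i - m i‖ ^ 2 := by ring
    _ ≤ C * M ^ 2 := by gcongr

variable [∀ j, CompleteSpace (V j)] [∀ j, MeasurableSpace (V j)] [∀ j, BorelSpace (V j)]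
  [∀ j, CompactSpace (W j)] {μ : ∀ j, Measure (W j)} [∀ j, IsProbabilityMeasure (μ j)]

theorem neg_le_integral_hybrid_succ_sub (hf : Differentiable ℝ f)
    (hf' : Differentiable ℝ (fderiv ℝ f)) (hW : ∀ j, Convex ℝ (W j)) (hC0 : 0 ≤ C)
    (hC : ∀ y ∈ Set.univ.pi W, ∀ z : V i,
      |fderiv ℝ (fun y => fderiv ℝ f y (Pi.single i z)) y (Pi.single i z)| ≤ C * ‖z‖ * ‖z‖)
    (hM : ∀ z ∈ W i, ∀ z' ∈ W i, ‖z - z'‖ ≤ M) (hmW : m ∈ Set.univ.pi W)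
    (hm : ∫ w, (w : V i) ∂μ i = m i) :
    -(M ^ 2 / 2) * C ≤ ∫ w, (f (hybrid (fun j => (w j : V j)) m (i + 1)) -
      f (hybrid (fun j => (w j : V j)) m i)) ∂Measure.pi μ := by
  have hcoord : Integrable (fun w : W i => (w : V i)) (μ i) :=
    continuous_subtype_val.integrable_of_compactSpace
  set T : (∀ j, W j) → V i →L[ℝ] ℝ :=
    fun w => (fderiv ℝ f (hybrid (fun j => (w j : V j)) m i)).comp (coordL V i)
  have hT : ∀ w a, T (Function.update w i a) = T w := fun w a => by
    simp only [T]
    rw [hybrid_congr (y := fun j => (w j : V j)) fun j hj => by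
      simp [Function.update_of_ne (Fin.ne_of_lt hj)]]
  have hTint : Integrable (fun w => T w ((w i : V i) - m i)) (Measure.pi μ) :=
    Continuous.integrable_of_compactSpace <|
      ((hf'.continuous.comp continuous_hybrid_subtype_val).clm_comp continuous_const).clm_apply
        ((continuous_subtype_val.comp (continuous_apply i)).sub continuous_const)
  have hmean_zero : ∫ w, T w ((w i : V i) - m i) ∂Measure.pi μ = 0 := by
    refine integral_pi_clm_apply_eq_zero hT (hcoord.sub (integrable_const _)) ?_ hTint
    change ∫ a, ((a : V i) - m i) ∂μ i = 0
    rw [integral_sub hcoord (integrable_const _), hm, integral_const, probReal_univ, one_smul,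
      sub_self]
  have hfint : ∀ k, Integrable (fun w : ∀ j, W j => f (hybrid (fun j => (w j : V j)) m k))
      (Measure.pi μ) := fun k =>
    (hf.continuous.comp continuous_hybrid_subtype_val).integrable_of_compactSpace
  calc -(M ^ 2 / 2) * C = ∫ w, (T w ((w i : V i) - m i) - C * M ^ 2 / 2) ∂Measure.pi μ := by
        rw [integral_sub hTint (integrable_const _), hmean_zero, integral_const, probReal_univ,
          one_smul]
        ring
    _ ≤ _ := integral_mono (hTint.sub (integrable_const _)) ((hfint _).sub (hfint _)) fun w =>
        fderiv_hybrid_sub_half_le_hybrid_succ_sub hf hf' hW hC0 hC hM (fun j _ => (w j).2) hmW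

theorem neg_le_integral_sub_mean (hf : Differentiable ℝ f) (hf' : Differentiable ℝ (fderiv ℝ f))
    (hW : ∀ j, Convex ℝ (W j)) {c : Fin n → ℝ} (hc0 : ∀ i, 0 ≤ c i)
    (hc : ∀ y ∈ Set.univ.pi W, ∀ (i : Fin n) (z : V i),
      |fderiv ℝ (fun y => fderiv ℝ f y (Pi.single i z)) y (Pi.single i z)| ≤ c i * ‖z‖ * ‖z‖)
    (hM : ∀ i, ∀ z ∈ W i, ∀ z' ∈ W i, ‖z - z'‖ ≤ M) (hmW : m ∈ Set.univ.pi W)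
    (hm : ∀ i, ∫ w, (w : V i) ∂μ i = m i) :
    -(M ^ 2 / 2) * ∑ i, c i ≤ ∫ w, (f (fun j => (w j : V j)) - f m) ∂Measure.pi μ := by
  set F : ℕ → (∀ j, W j) → ℝ := fun k w => f (hybrid (fun j => (w j : V j)) m k)
  have hFint : ∀ k, Integrable (F k) (Measure.pi μ) := fun k =>
    (hf.continuous.comp continuous_hybrid_subtype_val).integrable_of_compactSpace
  calc -(M ^ 2 / 2) * ∑ i, c i = ∑ i, -(M ^ 2 / 2) * c i := Finset.mul_sum _ _ _
    _ ≤ ∑ i : Fin n, ∫ w, (F (i + 1) w - F i w) ∂Measure.pi μ := Finset.sum_le_sum fun i _ =>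
        neg_le_integral_hybrid_succ_sub hf hf' hW (hc0 i) (hc · · i) (hM i) hmW (hm i)
    _ = ∫ w, ∑ i : Fin n, (F (i + 1) w - F i w) ∂Measure.pi μ :=
        (integral_finsetSum _ fun i _ => (hFint _).sub (hFint _)).symm
    _ = _ := by simp only [F, ← sub_eq_sum_hybrid_succ_sub f]

end Coordinate

theorem mean_comparison_general
    {n : ℕ} {V : Fin n → Type*}
    [∀ i, NormedAddCommGroup (V i)] [∀ i, NormedSpace ℝ (V i)]
    [∀ i, CompleteSpace (V i)] [∀ i, MeasurableSpace (V i)] [∀ i, BorelSpace (V i)]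
    (W : ∀ i, Set (V i))
    (hWc : ∀ i, IsCompact (W i)) (hWconv : ∀ i, Convex ℝ (W i))
    (f : (∀ j, V j) → ℝ)
    (hf1 : Differentiable ℝ f) (hf2 : Differentiable ℝ (fderiv ℝ f))
    (c : Fin n → Fin n → ℝ) (hc_pos : ∀ i j, 0 < c i j)
    (hc : ∀ x ∈ Set.univ.pi W, ∀ (i j : Fin n) (zi : V i) (rj : V j),
      |fderiv ℝ (fun y => fderiv ℝ f y (Pi.single i zi)) x (Pi.single j rj)|
        ≤ c i j * ‖zi‖ * ‖rj‖)
    (M : ℝ)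
    (hMW : ∀ i, ∀ z ∈ W i, ∀ z' ∈ W i, ‖z - z'‖ ≤ M)
    (ν : ∀ i, Measure (V i)) [∀ i, IsProbabilityMeasure (ν i)]
    (hνW : ∀ i, ν i (W i) = 1) :
    ∫ x, (f x - f (fun i => ∫ z, z ∂(ν i))) ∂(Measure.pi ν) ≥
      -(M ^ 2 / 2) * ∑ i, c i i := by
  have hWm : ∀ i, MeasurableSet (W i) := fun i => (hWc i).isClosed.measurableSet
  have hνW' : ∀ i, ∀ᵐ z ∂ν i, z ∈ W i := fun i => (mem_ae_iff_prob_eq_one (hWm i)).2 (hνW i)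
  have _ : ∀ i, CompactSpace (W i) := fun i => isCompact_iff_compactSpace.mp (hWc i)
  have _ : ∀ i, IsProbabilityMeasure ((ν i).comap ((↑) : W i → V i)) := fun i =>
    (MeasurableEmbedding.subtype_coe (hWm i)).isProbabilityMeasure_comap (by simpa using hνW' i)
  have hmean : ∀ i, ∫ w : W i, (w : V i) ∂(ν i).comap (↑) = ∫ z, z ∂ν i := fun i => by
    rw [integral_subtype_comap (hWm i) fun z => z, Measure.restrict_eq_self_of_ae_mem (hνW' i)]
  have hmW : (fun i => ∫ z, z ∂ν i) ∈ Set.univ.pi W := fun i _ => by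
    show ∫ z, z ∂ν i ∈ W i
    rw [← hmean i]
    exact (hWconv i).integral_mem (hWc i).isClosed (ae_of_all _ fun w => w.2)
      continuous_subtype_val.integrable_of_compactSpace
  rw [integral_pi_eq_integral_pi_comap_subtype hWm hνW', ge_iff_le]
  exact neg_le_integral_sub_mean hf1 hf2 hWconv (fun i => (hc_pos i i).le)
    (fun x hx i z => hc x hx i i z z) hMW hmW hmean

/-- **Mean comparison inequality.** For a twice Fréchet differentiable `f` with
`‖f_{ii}(x)‖ ≤ c_{ii}` on `W = W_1 × ⋯ × W_n` and diameter bound `M` on each `W i`,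
for every product probability measure `ν` supported on `W`,
`∫ (f(x) - f(m(ν))) dν(x) ≥ -(M²/2) ∑ c_{ii}`. -/
theorem mean_comparison
    {n : ℕ} {V : Fin n → Type*}
    [∀ i, NormedAddCommGroup (V i)] [∀ i, NormedSpace ℝ (V i)]
    [∀ i, CompleteSpace (V i)] [∀ i, MeasurableSpace (V i)] [∀ i, BorelSpace (V i)]
    (W : ∀ i, Set (V i))
    (hWc : ∀ i, IsCompact (W i)) (hWconv : ∀ i, Convex ℝ (W i))
    (f : (∀ j, V j) → ℝ)
    (hf1 : Differentiable ℝ f) (hf2 : Differentiable ℝ (fderiv ℝ f))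
    (c : Fin n → Fin n → ℝ) (hc_pos : ∀ i j, 0 < c i j)
    (hc : ∀ x ∈ Set.univ.pi W, ∀ (i j : Fin n) (zi : V i) (rj : V j),
      |fderiv ℝ (fun y => fderiv ℝ f y (Pi.single i zi)) x (Pi.single j rj)|
        ≤ c i j * ‖zi‖ * ‖rj‖)
    (M : ℝ) (hM : 0 < M)
    (hMW : ∀ i, ∀ z ∈ W i, ∀ z' ∈ W i, ‖z - z'‖ ≤ M)
    (ν : ∀ i, Measure (V i)) [∀ i, IsProbabilityMeasure (ν i)]
    (hνW : ∀ i, ν i (W i) = 1) :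
    ∫ x, (f x - f (fun i => ∫ z, z ∂(ν i))) ∂(Measure.pi ν) ≥
      -(M ^ 2 / 2) * ∑ i, c i i :=
  mean_comparison_general W hWc hWconv f hf1 hf2 c hc_pos hc M hMW ν hνW
end

section
/- Covering of the tilted conditional means: In the Banach-space product setting, let x ∈ W, let x̂ = (x̂_1,…,x̂_n) be the vector of tilted conditional means under e^f, and let d = (d_1,…,d_n) be bounded linear functionals with Σ_{i=1}^n ‖f_i(x) − d_i‖² ≤ ε²n, with tilted means p_i = ∫_{W_i} z e^{d_i(z)} dμ_i(z) / ∫_{W_i} e^{d_i(z)} dμ_i(z). Then ( Σ_{i=1}^n ‖x̂_i − p_i‖²_{V_i} )^{1/2} ≤ √2 · M³ ( Σ_{i=1}^n c_{ii}² )^{1/2} + √2 · M² n^{1/2} ε. -/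
open MeasureTheory Real

/-- The tilted conditional mean `x̂ᵢ` of the `i`-th coordinate under `e^f`. -/
noncomputable def tiltedCondMean {n : ℕ} {V : Fin n → Type*}
    [∀ i, NormedAddCommGroup (V i)] [∀ i, NormedSpace ℝ (V i)]
    [∀ i, MeasurableSpace (V i)]
    (μ : ∀ i, Measure (V i)) (f : (∀ j, V j) → ℝ) (x : ∀ j, V j) (i : Fin n) : V i :=
  (∫ z, Real.exp (f (Function.update x i z)) ∂(μ i))⁻¹ •
    ∫ z, Real.exp (f (Function.update x i z)) • z ∂(μ i)

/-- The mean of the exponential tilt of `μ` by a bounded linear functional `d`. -/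
noncomputable def tiltMean {E : Type*} [NormedAddCommGroup E] [NormedSpace ℝ E]
    [MeasurableSpace E] (μ : Measure E) (d : E →L[ℝ] ℝ) : E :=
  (∫ z, Real.exp (d z) ∂μ)⁻¹ • ∫ z, Real.exp (d z) • z ∂μ

/-!
For each coordinate, `x̂ᵢ` and `pᵢ` are the means of the exponential tilts of `μᵢ` by
`g(z) = f(x_z^{(i)})` and by `dᵢ`. Two applications of the mean value inequality show that
`g - dᵢ` oscillates on `Wᵢ` by at most `δᵢ = M (cᵢᵢ M + ‖fᵢ(x) - dᵢ‖)`, so the two tilted densities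
satisfy `e^{-δᵢ} w_{dᵢ} ≤ w_g` and are within `2 δᵢ` in total variation. Pairing `x̂ᵢ - pᵢ` with a
norming functional, recentred to vary by at most `M / 2` on `Wᵢ`, gives `‖x̂ᵢ - pᵢ‖ ≤ M δᵢ`, and
Minkowski's inequality in `ℓ²` sums these bounds.
-/

theorem Continuous.integrable_of_ae_mem_compact {X F : Type*} [TopologicalSpace X] [T2Space X]
    [MeasurableSpace X] [OpensMeasurableSpace X] [NormedAddCommGroup F] {ν : Measure X}
    [IsFiniteMeasure ν] {K : Set X} {φ : X → F} (hφ : Continuous φ) (hK : IsCompact K)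
    (hνK : ∀ᵐ z ∂ν, z ∈ K) : Integrable φ ν := by
  rw [← Measure.restrict_eq_self_of_ae_mem hνK]
  exact hφ.continuousOn.integrableOn_compact hK

theorem IsCompact.exists_forall_abs_sub_le_half {X : Type*} [TopologicalSpace X] {K : Set X}
    {φ : X → ℝ} (hK : IsCompact K) (hKne : K.Nonempty) (hφ : Continuous φ) {M : ℝ}
    (hosc : ∀ z ∈ K, ∀ z' ∈ K, φ z - φ z' ≤ M) : ∃ s, ∀ z ∈ K, |φ z - s| ≤ M / 2 := by
  obtain ⟨zmax, hzmax, hmax⟩ := hK.exists_isMaxOn hKne hφ.continuousOn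
  obtain ⟨zmin, hzmin, hmin⟩ := hK.exists_isMinOn hKne hφ.continuousOn
  refine ⟨(φ zmax + φ zmin) / 2, fun z hz => abs_le.2 ⟨?_, ?_⟩⟩ <;>
    linarith [isMaxOn_iff.1 hmax z hz, isMinOn_iff.1 hmin z hz, hosc zmax hzmax zmin hzmin]

theorem integral_abs_sub_le_two_mul {α : Type*} [MeasurableSpace α] {ν : Measure α}
    {p q : α → ℝ} (hp : Integrable p ν) (hq : Integrable q ν)
    (hpq : ∫ z, p z ∂ν = ∫ z, q z ∂ν) (hq1 : ∫ z, q z ∂ν = 1) {δ : ℝ} (hδ : 0 ≤ δ)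
    (hq0 : ∀ᵐ z ∂ν, 0 ≤ q z) (hle : ∀ᵐ z ∂ν, q z - p z ≤ δ * q z) :
    ∫ z, |p z - q z| ∂ν ≤ 2 * δ := by
  have habs : ∀ z, |p z - q z| = (p z - q z) + 2 * max (q z - p z) 0 := by
    intro z
    rcases le_total (p z) (q z) with h | h
    · rw [abs_of_nonpos (by linarith), max_eq_left (by linarith)]; ring
    · rw [abs_of_nonneg (by linarith), max_eq_right (by linarith)]; ring
  have hpart : Integrable (fun z => max (q z - p z) 0) ν := (hq.sub hp).pos_part
  have hpos : ∫ z, max (q z - p z) 0 ∂ν ≤ δ := by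
    calc ∫ z, max (q z - p z) 0 ∂ν ≤ ∫ z, δ * q z ∂ν := by
          refine integral_mono_ae hpart (hq.const_mul δ) ?_
          filter_upwards [hq0, hle] with z hz0 hz
          exact max_le hz (mul_nonneg hδ hz0)
      _ = δ := by rw [integral_const_mul, hq1, mul_one]
  simp_rw [habs]
  rw [integral_add (f := fun z => p z - q z) (hp.sub hq) (hpart.const_mul 2),
    integral_sub hp hq, integral_const_mul, hpq, sub_self, zero_add]
  linarith

noncomputable def tiltDensity {α : Type*} [MeasurableSpace α] (ν : Measure α) (g : α → ℝ)
    (z : α) : ℝ :=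
  (∫ y, exp (g y) ∂ν)⁻¹ * exp (g z)

section TiltDensity

variable {α : Type*} [MeasurableSpace α] {ν : Measure α} {g h : α → ℝ}

theorem tiltDensity_nonneg (z : α) : 0 ≤ tiltDensity ν g z :=
  mul_nonneg (inv_nonneg.2 (integral_nonneg fun _ => (exp_pos _).le)) (exp_pos _).le

theorem integrable_tiltDensity (hg : Integrable (fun z => exp (g z)) ν) :
    Integrable (tiltDensity ν g) ν :=
  hg.const_mul _

theorem integral_tiltDensity [NeZero ν] (hg : Integrable (fun z => exp (g z)) ν) :
    ∫ z, tiltDensity ν g z ∂ν = 1 := by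
  simp only [tiltDensity]
  rw [integral_const_mul, inv_mul_cancel₀ (integral_exp_pos hg).ne']

theorem exp_neg_mul_tiltDensity_le [NeZero ν] (hg : Integrable (fun z => exp (g z)) ν)
    (hh : Integrable (fun z => exp (h z)) ν) {δ : ℝ} {z : α}
    (hosc : ∀ᵐ y ∂ν, (g y - h y) - (g z - h z) ≤ δ) :
    exp (-δ) * tiltDensity ν h z ≤ tiltDensity ν g z := by
  have hZ : ∫ y, exp (g y) ∂ν ≤ (∫ y, exp (h y) ∂ν) * exp (g z - h z + δ) := by
    rw [← integral_mul_const]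
    refine integral_mono_ae hg (hh.mul_const _) ?_
    filter_upwards [hosc] with y hy
    rw [← exp_add]
    exact exp_le_exp.2 (by linarith)
  have hZh := integral_exp_pos hh
  calc exp (-δ) * tiltDensity ν h z
      = exp (g z) * ((∫ y, exp (h y) ∂ν) * exp (g z - h z + δ))⁻¹ := by
        have hexp : exp (g z) * (exp (g z - h z + δ))⁻¹ = exp (-δ) * exp (h z) := by
          rw [← exp_neg, ← exp_add, ← exp_add]; ring_nf
        rw [tiltDensity, mul_inv]
        linear_combination (-(∫ y, exp (h y) ∂ν)⁻¹) * hexp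
    _ ≤ exp (g z) * (∫ y, exp (g y) ∂ν)⁻¹ :=
        mul_le_mul_of_nonneg_left (inv_anti₀ (integral_exp_pos hg) hZ) (exp_pos _).le
    _ = tiltDensity ν g z := mul_comm _ _

theorem integral_abs_tiltDensity_sub_le [NeZero ν] (hg : Integrable (fun z => exp (g z)) ν)
    (hh : Integrable (fun z => exp (h z)) ν) {K : Set α} (hνK : ∀ᵐ z ∂ν, z ∈ K) {δ : ℝ}
    (hδ : 0 ≤ δ) (hosc : ∀ y ∈ K, ∀ z ∈ K, (g y - h y) - (g z - h z) ≤ δ) :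
    ∫ z, |tiltDensity ν g z - tiltDensity ν h z| ∂ν ≤ 2 * δ := by
  refine integral_abs_sub_le_two_mul (integrable_tiltDensity hg) (integrable_tiltDensity hh)
    (by rw [integral_tiltDensity hg, integral_tiltDensity hh]) (integral_tiltDensity hh) hδ
    (.of_forall tiltDensity_nonneg) ?_
  filter_upwards [hνK] with z hz
  have hlow := exp_neg_mul_tiltDensity_le hg hh (δ := δ) (z := z)
    (by filter_upwards [hνK] with y hy using hosc y hy z hz)
  nlinarith [add_one_le_exp (-δ), tiltDensity_nonneg (ν := ν) (g := h) z]

@[fun_prop]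
theorem continuous_tiltDensity [TopologicalSpace α] (hg : Continuous g) :
    Continuous (tiltDensity ν g) :=
  continuous_const.mul (continuous_exp.comp hg)

end TiltDensity

noncomputable def expTiltMean {E : Type*} [NormedAddCommGroup E] [NormedSpace ℝ E]
    [MeasurableSpace E] (ν : Measure E) (g : E → ℝ) : E :=
  (∫ z, exp (g z) ∂ν)⁻¹ • ∫ z, exp (g z) • z ∂ν

section ExpTiltMean

variable {E : Type*} [NormedAddCommGroup E] [NormedSpace ℝ E] [CompleteSpace E]
  [MeasurableSpace E] {ν : Measure E} {g h : E → ℝ}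

theorem map_expTiltMean_sub [NeZero ν] (hg : Integrable (fun z => exp (g z)) ν)
    (hgz : Integrable (fun z => exp (g z) • z) ν) (u : E →L[ℝ] ℝ) (s : ℝ) :
    u (expTiltMean ν g) - s = ∫ z, (u z - s) * tiltDensity ν g z ∂ν := by
  set Z := ∫ z, exp (g z) ∂ν
  calc u (expTiltMean ν g) - s
      = Z⁻¹ * ∫ z, u (exp (g z) • z) ∂ν - s * ∫ z, tiltDensity ν g z ∂ν := by
        rw [expTiltMean, map_smul, u.integral_comp_comm hgz, integral_tiltDensity hg,
          smul_eq_mul, mul_one]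
    _ = ∫ z, (Z⁻¹ * u (exp (g z) • z) - s * tiltDensity ν g z) ∂ν := by
        rw [integral_sub ((u.integrable_comp hgz).const_mul _)
          ((integrable_tiltDensity hg).const_mul _), integral_const_mul, integral_const_mul]
    _ = ∫ z, (u z - s) * tiltDensity ν g z ∂ν := by
        congr 1 with z
        rw [map_smul, smul_eq_mul, tiltDensity]
        ring

theorem norm_expTiltMean_sub_le [BorelSpace E] [IsProbabilityMeasure ν] {K : Set E}
    (hK : IsCompact K) (hνK : ∀ᵐ z ∂ν, z ∈ K)
    (hg : Continuous g) (hh : Continuous h) {M δ : ℝ}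
    (hdiam : ∀ z ∈ K, ∀ z' ∈ K, ‖z - z'‖ ≤ M)
    (hosc : ∀ z ∈ K, ∀ z' ∈ K, (g z - h z) - (g z' - h z') ≤ δ) :
    ‖expTiltMean ν g - expTiltMean ν h‖ ≤ M * δ := by
  obtain ⟨z₀, hz₀⟩ := hνK.exists
  have hδ : 0 ≤ δ := by simpa using hosc z₀ hz₀ z₀ hz₀
  have hM : 0 ≤ M := (norm_nonneg _).trans (hdiam z₀ hz₀ z₀ hz₀)
  have hint : ∀ {φ : E → ℝ}, Continuous φ → Integrable φ ν :=
    fun hφ => hφ.integrable_of_ae_mem_compact hK hνK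
  have hintE : ∀ {φ : E → E}, Continuous φ → Integrable φ ν :=
    fun hφ => hφ.integrable_of_ae_mem_compact hK hνK
  obtain ⟨u, hu1, hu⟩ := exists_dual_vector'' ℝ (expTiltMean ν g - expTiltMean ν h)
  obtain ⟨s, hs⟩ : ∃ s, ∀ z ∈ K, |u z - s| ≤ M / 2 := by
    refine hK.exists_forall_abs_sub_le_half ⟨z₀, hz₀⟩ u.continuous fun z hz z' hz' => ?_
    calc u z - u z' = u (z - z') := (map_sub u z z').symm
      _ ≤ ‖u‖ * ‖z - z'‖ := (le_abs_self _).trans (u.le_opNorm _)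
      _ ≤ 1 * M := mul_le_mul hu1 (hdiam z hz z' hz') (norm_nonneg _) zero_le_one
      _ = M := one_mul M
  have hpair : ‖expTiltMean ν g - expTiltMean ν h‖
      = ∫ z, (u z - s) * (tiltDensity ν g z - tiltDensity ν h z) ∂ν := by
    calc ‖expTiltMean ν g - expTiltMean ν h‖ = u (expTiltMean ν g - expTiltMean ν h) := hu.symm
      _ = (u (expTiltMean ν g) - s) - (u (expTiltMean ν h) - s) := by rw [map_sub]; ring
      _ = _ := by
        rw [map_expTiltMean_sub (hint (by fun_prop)) (hintE (by fun_prop)),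
          map_expTiltMean_sub (hint (by fun_prop)) (hintE (by fun_prop)),
          ← integral_sub (hint (by fun_prop)) (hint (by fun_prop))]
        congr 1 with z
        ring
  calc ‖expTiltMean ν g - expTiltMean ν h‖
      ≤ ∫ z, M / 2 * |tiltDensity ν g z - tiltDensity ν h z| ∂ν := by
        rw [hpair]
        refine integral_mono_ae (hint (by fun_prop)) (hint (by fun_prop)) ?_
        filter_upwards [hνK] with z hz
        exact (le_abs_self _).trans ((abs_mul _ _).trans_le
          (mul_le_mul_of_nonneg_right (hs z hz) (abs_nonneg _)))
    _ ≤ M / 2 * (2 * δ) := by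
        rw [integral_const_mul]
        exact mul_le_mul_of_nonneg_left (integral_abs_tiltDensity_sub_le
          (hint (by fun_prop)) (hint (by fun_prop)) hνK hδ hosc) (by positivity)
    _ = M * δ := by ring

end ExpTiltMean

section PartialDerivatives

variable {n : ℕ} {V : Fin n → Type*} [∀ i, NormedAddCommGroup (V i)] [∀ i, NormedSpace ℝ (V i)]
  {f : (∀ j, V j) → ℝ} {x : ∀ j, V j} {i : Fin n}

@[simp]
theorem coordL_apply (i : Fin n) (z : V i) : coordL V i z = Pi.single i z := rfl

theorem hasFDerivAt_update_coordL (x : ∀ j, V j) (i : Fin n) (ξ : V i) :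
    HasFDerivAt (Function.update x i) (coordL V i) ξ := by
  convert hasFDerivAt_update (𝕜 := ℝ) x ξ using 1
  ext z j
  rcases eq_or_ne j i with rfl | hj
  · simp
  · simp [hj]

theorem hasFDerivAt_comp_update (hf : Differentiable ℝ f) (ξ : V i) :
    HasFDerivAt (fun z => f (Function.update x i z)) (partialD f (Function.update x i ξ) i) ξ :=
  (hf _).hasFDerivAt.comp ξ (hasFDerivAt_update_coordL x i ξ)

theorem norm_partialD_update_sub_le (hf : Differentiable ℝ (fderiv ℝ f)) {S : Set (V i)}
    (hS : Convex ℝ S) (hxS : x i ∈ S) {C : ℝ} (hC0 : 0 ≤ C)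
    (hC : ∀ w ∈ S, ∀ zi ri : V i, |fderiv ℝ (fun y => fderiv ℝ f y (Pi.single i zi))
      (Function.update x i w) (Pi.single i ri)| ≤ C * ‖zi‖ * ‖ri‖)
    {ξ : V i} (hξ : ξ ∈ S) :
    ‖partialD f (Function.update x i ξ) i - partialD f x i‖ ≤ C * ‖ξ - x i‖ := by
  refine ContinuousLinearMap.opNorm_le_bound _ (by positivity) fun zi => ?_
  set fzi : (∀ j, V j) → ℝ := fun y => fderiv ℝ f y (Pi.single i zi)
  have hfzi : Differentiable ℝ fzi :=
    (ContinuousLinearMap.apply ℝ ℝ (Pi.single i zi)).differentiable.comp hf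
  have hbound : ∀ w ∈ S, ‖partialD fzi (Function.update x i w) i‖ ≤ C * ‖zi‖ :=
    fun w hw => ContinuousLinearMap.opNorm_le_bound _ (by positivity) (hC w hw zi)
  have hmvt := hS.norm_image_sub_le_of_norm_hasFDerivWithin_le
    (fun w _ => (hasFDerivAt_comp_update hfzi w).hasFDerivWithinAt) hbound hxS hξ
  rw [Function.update_eq_self] at hmvt
  calc ‖(partialD f (Function.update x i ξ) i - partialD f x i) zi‖
      = ‖fzi (Function.update x i ξ) - fzi x‖ := rfl
    _ ≤ C * ‖zi‖ * ‖ξ - x i‖ := hmvt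
    _ = C * ‖ξ - x i‖ * ‖zi‖ := by ring

theorem comp_update_sub_oscillation_le (hf1 : Differentiable ℝ f)
    (hf2 : Differentiable ℝ (fderiv ℝ f)) {S : Set (V i)} (hS : Convex ℝ S) (hxS : x i ∈ S)
    {C M : ℝ} (hC0 : 0 ≤ C)
    (hC : ∀ w ∈ S, ∀ zi ri : V i, |fderiv ℝ (fun y => fderiv ℝ f y (Pi.single i zi))
      (Function.update x i w) (Pi.single i ri)| ≤ C * ‖zi‖ * ‖ri‖)
    (hdiam : ∀ z ∈ S, ∀ z' ∈ S, ‖z - z'‖ ≤ M) (d : V i →L[ℝ] ℝ)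
    {z z' : V i} (hz : z ∈ S) (hz' : z' ∈ S) :
    (f (Function.update x i z) - d z) - (f (Function.update x i z') - d z')
      ≤ M * (C * M + ‖partialD f x i - d‖) := by
  have hM : 0 ≤ M := (norm_nonneg _).trans (hdiam z hz z hz)
  have hbound : ∀ w ∈ S, ‖partialD f (Function.update x i w) i - d‖
      ≤ C * M + ‖partialD f x i - d‖ := fun w hw =>
    calc ‖partialD f (Function.update x i w) i - d‖
        ≤ ‖partialD f (Function.update x i w) i - partialD f x i‖ + ‖partialD f x i - d‖ :=
          norm_sub_le_norm_sub_add_norm_sub _ _ _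
      _ ≤ C * ‖w - x i‖ + ‖partialD f x i - d‖ := by
          gcongr; exact norm_partialD_update_sub_le hf2 hS hxS hC0 hC hw
      _ ≤ C * M + ‖partialD f x i - d‖ := by gcongr; exact hdiam w hw (x i) hxS
  have hmvt := hS.norm_image_sub_le_of_norm_hasFDerivWithin_le
    (fun w _ => ((hasFDerivAt_comp_update hf1 w).sub d.hasFDerivAt).hasFDerivWithinAt)
    hbound hz' hz
  calc (f (Function.update x i z) - d z) - (f (Function.update x i z') - d z')
      ≤ (C * M + ‖partialD f x i - d‖) * ‖z - z'‖ := (le_abs_self _).trans hmvt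
    _ ≤ M * (C * M + ‖partialD f x i - d‖) := by
      rw [mul_comm M]
      exact mul_le_mul_of_nonneg_left (hdiam z hz z' hz') (by positivity)

end PartialDerivatives

theorem norm_tiltedCondMean_sub_tiltMean_le {n : ℕ} {V : Fin n → Type*}
    [∀ i, NormedAddCommGroup (V i)] [∀ i, NormedSpace ℝ (V i)] [∀ i, CompleteSpace (V i)]
    [∀ i, MeasurableSpace (V i)] [∀ i, BorelSpace (V i)] (μ : ∀ i, Measure (V i))
    [∀ i, IsProbabilityMeasure (μ i)] {f : (∀ j, V j) → ℝ} (hf1 : Differentiable ℝ f)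
    (hf2 : Differentiable ℝ (fderiv ℝ f)) {x : ∀ j, V j} {i : Fin n} {S : Set (V i)}
    (hSc : IsCompact S) (hSconv : Convex ℝ S) (hμS : μ i S = 1) (hxS : x i ∈ S)
    {C M : ℝ} (hC0 : 0 ≤ C)
    (hC : ∀ w ∈ S, ∀ zi ri : V i, |fderiv ℝ (fun y => fderiv ℝ f y (Pi.single i zi))
      (Function.update x i w) (Pi.single i ri)| ≤ C * ‖zi‖ * ‖ri‖)
    (hdiam : ∀ z ∈ S, ∀ z' ∈ S, ‖z - z'‖ ≤ M) (d : V i →L[ℝ] ℝ) :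
    ‖tiltedCondMean μ f x i - tiltMean (μ i) d‖ ≤ M ^ 3 * C + M ^ 2 * ‖partialD f x i - d‖ := by
  have hνS : ∀ᵐ z ∂(μ i), z ∈ S := by
    rwa [ae_mem_iff_measure_eq hSc.isClosed.measurableSet.nullMeasurableSet, measure_univ]
  have hcont : Continuous fun z => f (Function.update x i z) :=
    continuous_iff_continuousAt.2 fun z => (hasFDerivAt_comp_update hf1 z).continuousAt
  calc ‖tiltedCondMean μ f x i - tiltMean (μ i) d‖
      = ‖expTiltMean (μ i) (fun z => f (Function.update x i z)) - expTiltMean (μ i) d‖ := rfl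
    _ ≤ M * (M * (C * M + ‖partialD f x i - d‖)) :=
      norm_expTiltMean_sub_le hSc hνS hcont d.continuous hdiam fun z hz z' hz' =>
        comp_update_sub_oscillation_le hf1 hf2 hSconv hxS hC0 hC hdiam d hz hz'
    _ = M ^ 3 * C + M ^ 2 * ‖partialD f x i - d‖ := by ring

theorem sqrt_sum_sq_le_of_le_add {ι : Type*} [Fintype ι] {e a b : ι → ℝ}
    (he : ∀ i, 0 ≤ e i) (hle : ∀ i, e i ≤ a i + b i) :
    √(∑ i, e i ^ 2) ≤ √(∑ i, a i ^ 2) + √(∑ i, b i ^ 2) := by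
  let A : EuclideanSpace ℝ ι := WithLp.toLp 2 a
  let B : EuclideanSpace ℝ ι := WithLp.toLp 2 b
  calc √(∑ i, e i ^ 2) ≤ ‖A + B‖ := by
        rw [EuclideanSpace.norm_eq]
        refine sqrt_le_sqrt (Finset.sum_le_sum fun i _ => ?_)
        simpa [A, B] using pow_le_pow_left₀ (he i) ((hle i).trans (le_abs_self _)) 2
    _ ≤ ‖A‖ + ‖B‖ := norm_add_le A B
    _ = √(∑ i, a i ^ 2) + √(∑ i, b i ^ 2) := by simp [A, B, EuclideanSpace.norm_eq]

theorem sqrt_sum_mul_sq {ι : Type*} [Fintype ι] {k : ℝ} (hk : 0 ≤ k) (a : ι → ℝ) :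
    √(∑ i, (k * a i) ^ 2) = k * √(∑ i, a i ^ 2) := by
  simp_rw [mul_pow, ← Finset.mul_sum]
  rw [sqrt_mul (sq_nonneg k), sqrt_sq hk]

/-- **Covering of the tilted conditional means.** If
`∑ ‖f_i(x) - d i‖² ≤ ε² n`, then
`(∑ ‖x̂ᵢ - pᵢ‖²)^{1/2} ≤ √2 M³ (∑ c_{ii}²)^{1/2} + √2 M² n^{1/2} ε`. -/
theorem covering_of_tilted_means
    {n : ℕ} {V : Fin n → Type*}
    [∀ i, NormedAddCommGroup (V i)] [∀ i, NormedSpace ℝ (V i)]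
    [∀ i, CompleteSpace (V i)] [∀ i, MeasurableSpace (V i)] [∀ i, BorelSpace (V i)]
    (μ : ∀ i, Measure (V i)) [∀ i, IsProbabilityMeasure (μ i)]
    (W : ∀ i, Set (V i))
    (hWc : ∀ i, IsCompact (W i)) (hWconv : ∀ i, Convex ℝ (W i))
    (hμW : ∀ i, μ i (W i) = 1)
    (f : (∀ j, V j) → ℝ)
    (hf1 : Differentiable ℝ f) (hf2 : Differentiable ℝ (fderiv ℝ f))
    (c : Fin n → Fin n → ℝ) (hc_pos : ∀ i j, 0 < c i j)
    (hc : ∀ x ∈ Set.univ.pi W, ∀ (i : Fin n) (zi ri : V i),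
      |fderiv ℝ (fun y => fderiv ℝ f y (Pi.single i zi)) x (Pi.single i ri)|
        ≤ c i i * ‖zi‖ * ‖ri‖)
    (M : ℝ) (hM : 0 < M)
    (hMW : ∀ i, ∀ z ∈ W i, ∀ z' ∈ W i, ‖z - z'‖ ≤ M)
    (ε : ℝ) (hε : 0 < ε)
    (x : ∀ j, V j) (hx : x ∈ Set.univ.pi W)
    (d : ∀ i, V i →L[ℝ] ℝ)
    (hd : ∑ i, ‖partialD f x i - d i‖ ^ 2 ≤ ε ^ 2 * n) :
    Real.sqrt (∑ i, ‖tiltedCondMean μ f x i - tiltMean (μ i) (d i)‖ ^ 2) ≤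
      Real.sqrt 2 * M ^ 3 * Real.sqrt (∑ i, c i i ^ 2)
        + Real.sqrt 2 * M ^ 2 * Real.sqrt n * ε := by
  have hcoord : ∀ i, ‖tiltedCondMean μ f x i - tiltMean (μ i) (d i)‖
      ≤ M ^ 3 * c i i + M ^ 2 * ‖partialD f x i - d i‖ := fun i =>
    norm_tiltedCondMean_sub_tiltMean_le μ hf1 hf2 (hWc i) (hWconv i) (hμW i) (hx i trivial)
      (hc_pos i i).le (fun w hw => hc _ ((Set.update_mem_pi_iff_of_mem hx).2 fun _ => hw) i)
      (hMW i) (d i)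
  have hd' : √(∑ i, ‖partialD f x i - d i‖ ^ 2) ≤ √n * ε := by
    rw [← sqrt_sq hε.le, ← sqrt_mul (Nat.cast_nonneg n), mul_comm]
    exact sqrt_le_sqrt hd
  have hA : 0 ≤ M ^ 3 * √(∑ i, c i i ^ 2) := by positivity
  have hB : 0 ≤ M ^ 2 * (√n * ε) := by positivity
  have hsqrt2 : 1 ≤ √2 := one_le_sqrt.2 one_le_two
  calc √(∑ i, ‖tiltedCondMean μ f x i - tiltMean (μ i) (d i)‖ ^ 2)
      ≤ √(∑ i, (M ^ 3 * c i i) ^ 2) + √(∑ i, (M ^ 2 * ‖partialD f x i - d i‖) ^ 2) :=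
        sqrt_sum_sq_le_of_le_add (fun _ => norm_nonneg _) hcoord
    _ = M ^ 3 * √(∑ i, c i i ^ 2) + M ^ 2 * √(∑ i, ‖partialD f x i - d i‖ ^ 2) := by
        rw [sqrt_sum_mul_sq (by positivity), sqrt_sum_mul_sq (by positivity)]
    _ ≤ M ^ 3 * √(∑ i, c i i ^ 2) + M ^ 2 * (√n * ε) := by gcongr
    _ ≤ √2 * (M ^ 3 * √(∑ i, c i i ^ 2)) + √2 * (M ^ 2 * (√n * ε)) :=
        add_le_add (le_mul_of_one_le_left hA hsqrt2) (le_mul_of_one_le_left hB hsqrt2)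
    _ = √2 * M ^ 3 * √(∑ i, c i i ^ 2) + √2 * M ^ 2 * √n * ε := by ring
end

section
/- Triangle count lower bound via degrees: Let G be a simple graph on N vertices with edge set A and degrees deg(i). Then the number of triangles in G is at least (1/3)( Σ_{i=1}^N deg(i)² − |A|(N+1) ), and consequently at least (1/3)( 4|A|²/N − |A|(N+1) ). -/
/-!
For an edge `ab`, the neighbourhoods of `a` and `b` lie in a set of `N` vertices, so `a` and `b`
have at least `deg a + deg b - N` common neighbours. Summed over ordered edges, the numbers of
common neighbours count every triangle six times, while `∑ (deg a + deg b) = 2 ∑ deg²` and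
`∑ N = 2N|A|`; hence `3 · #triangles ≥ ∑ deg² - N|A|`. Cauchy–Schwarz,
`(2|A|)² = (∑ deg)² ≤ N ∑ deg²`, gives the second bound.
-/

open Finset

theorem Finset.card_filter_pairwise_ne_triple {α : Type*} [DecidableEq α] (s : Finset α) :
    #{p ∈ s ×ˢ s ×ˢ s | p.1 ≠ p.2.1 ∧ p.1 ≠ p.2.2 ∧ p.2.1 ≠ p.2.2} =
      #s * ((#s - 1) * (#s - 2)) := by
  have fiber (a : α) (ha : a ∈ s) :
      #{q ∈ s ×ˢ s | a ≠ q.1 ∧ a ≠ q.2 ∧ q.1 ≠ q.2} = (#s - 1) * (#s - 2) := by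
    have : {q ∈ s ×ˢ s | a ≠ q.1 ∧ a ≠ q.2 ∧ q.1 ≠ q.2} = (s.erase a).offDiag := by
      ext ⟨b, c⟩
      simp only [mem_filter, mem_product, mem_offDiag, mem_erase]
      tauto
    rw [this, offDiag_card, card_erase_of_mem ha, ← Nat.mul_sub_one, Nat.sub_sub]
  rw [card_filter, sum_product, ← sum_const_nat fiber]
  exact sum_congr rfl fun a _ => (card_filter _ _).symm

namespace SimpleGraph

variable {V : Type*} [Fintype V] (G : SimpleGraph V) [DecidableRel G.Adj]

def orderedTriangleFinset : Finset (V × V × V) :=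
  {p | G.Adj p.1 p.2.1 ∧ G.Adj p.1 p.2.2 ∧ G.Adj p.2.1 p.2.2}

variable {G} in
theorem filter_orderedTriangleFinset_eq [DecidableEq V] {s : Finset V} (hs : G.IsNClique 3 s) :
    {p ∈ G.orderedTriangleFinset | {p.1, p.2.1, p.2.2} = s} =
      {p ∈ s ×ˢ s ×ˢ s | p.1 ≠ p.2.1 ∧ p.1 ≠ p.2.2 ∧ p.2.1 ≠ p.2.2} := by
  ext ⟨a, b, c⟩
  simp only [orderedTriangleFinset, mem_filter, mem_univ, true_and, mem_product]
  constructor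
  · rintro ⟨⟨hab, hac, hbc⟩, rfl⟩
    simp [hab.ne, hac.ne, hbc.ne]
  · rintro ⟨⟨ha, hb, hc⟩, hab, hac, hbc⟩
    refine ⟨⟨hs.isClique ha hb hab, hs.isClique ha hc hac, hs.isClique hb hc hbc⟩, ?_⟩
    refine eq_of_subset_of_card_le (by simp [insert_subset_iff, ha, hb, hc]) ?_
    rw [hs.card_eq, card_eq_three.2 ⟨a, b, c, hab, hac, hbc, rfl⟩]

theorem card_orderedTriangleFinset [DecidableEq V] :
    #G.orderedTriangleFinset = #(G.cliqueFinset 3) * 6 := by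
  rw [card_eq_sum_card_fiberwise (f := fun p => {p.1, p.2.1, p.2.2}) (t := G.cliqueFinset 3)]
  · refine sum_const_nat fun s hs => ?_
    rw [mem_cliqueFinset_iff] at hs
    rw [filter_orderedTriangleFinset_eq hs, card_filter_pairwise_ne_triple, hs.card_eq]
  · rintro ⟨a, b, c⟩ hp
    simp only [orderedTriangleFinset, coe_filter, mem_univ, true_and, Set.mem_ofPred_eq] at hp
    simpa [mem_cliqueFinset_iff] using is3Clique_triple_iff.2 hp

theorem card_orderedTriangleFinset_eq_sum [DecidableEq V] :
    #G.orderedTriangleFinset =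
      ∑ a, ∑ b ∈ G.neighborFinset a, #(G.neighborFinset a ∩ G.neighborFinset b) := by
  rw [orderedTriangleFinset, card_filter, Fintype.sum_prod_type]
  refine sum_congr rfl fun a _ => ?_
  rw [Fintype.sum_prod_type, neighborFinset_eq_filter, sum_filter]
  refine sum_congr rfl fun b _ => ?_
  split_ifs with hab
  · simp only [hab, true_and, ← card_filter]
    congr 1
    ext c
    simp
  · simp [hab]

theorem sum_sum_neighborFinset_comm {M : Type*} [AddCommMonoid M] (f : V → V → M) :
    ∑ a, ∑ b ∈ G.neighborFinset a, f a b = ∑ a, ∑ b ∈ G.neighborFinset a, f b a :=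
  sum_comm' fun a b => by simp [adj_comm]

theorem sum_sum_neighborFinset_degree_add_degree :
    ∑ a, ∑ b ∈ G.neighborFinset a, (G.degree a + G.degree b) = 2 * ∑ a, G.degree a ^ 2 := by
  rw [sum_congr rfl fun a _ => sum_add_distrib, sum_add_distrib,
    sum_sum_neighborFinset_comm G fun _ b => G.degree b]
  simp only [sum_const, card_neighborFinset_eq_degree, smul_eq_mul, sq]
  ring

theorem degree_add_degree_le [DecidableEq V] (a b : V) :
    G.degree a + G.degree b ≤ #(G.neighborFinset a ∩ G.neighborFinset b) + Fintype.card V := by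
  rw [← card_neighborFinset_eq_degree, ← card_neighborFinset_eq_degree,
    ← card_union_add_card_inter]
  have := card_le_univ (G.neighborFinset a ∪ G.neighborFinset b)
  omega

theorem sum_degree_sq_le [DecidableEq V] :
    ∑ v, G.degree v ^ 2 ≤ 3 * #(G.cliqueFinset 3) + Fintype.card V * #G.edgeFinset := by
  suffices
      2 * ∑ v, G.degree v ^ 2 ≤ 2 * (3 * #(G.cliqueFinset 3) + Fintype.card V * #G.edgeFinset) by
    omega
  calc 2 * ∑ v, G.degree v ^ 2
      = ∑ a, ∑ b ∈ G.neighborFinset a, (G.degree a + G.degree b) :=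
        (sum_sum_neighborFinset_degree_add_degree G).symm
    _ ≤ ∑ a, ∑ b ∈ G.neighborFinset a,
          (#(G.neighborFinset a ∩ G.neighborFinset b) + Fintype.card V) :=
        sum_le_sum fun a _ => sum_le_sum fun b _ => G.degree_add_degree_le a b
    _ = #G.orderedTriangleFinset + Fintype.card V * ∑ a, G.degree a := by
        simp only [sum_add_distrib, card_orderedTriangleFinset_eq_sum, sum_const,
          card_neighborFinset_eq_degree, smul_eq_mul, mul_sum, mul_comm]
    _ = 2 * (3 * #(G.cliqueFinset 3) + Fintype.card V * #G.edgeFinset) := by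
        rw [card_orderedTriangleFinset, sum_degrees_eq_twice_card_edges]
        ring

theorem four_mul_card_edgeFinset_sq_le :
    4 * #G.edgeFinset ^ 2 ≤ Fintype.card V * ∑ v, G.degree v ^ 2 := by
  have := sq_sum_le_card_mul_sum_sq (s := univ) (f := fun v => G.degree v)
  rw [sum_degrees_eq_twice_card_edges, card_univ, mul_pow] at this
  simpa using this

end SimpleGraph

/-- **Triangle count lower bound via degrees.** For a simple graph `G` on `N` vertices
with `|A|` edges, the number of triangles of `G` is at least
`(1/3)(∑ deg(i)² - |A|(N+1))`, and consequently at least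
`(1/3)(4|A|²/N - |A|(N+1))`. -/
theorem triangle_count_lower_bound {N : ℕ} (G : SimpleGraph (Fin N))
    [DecidableRel G.Adj] :
    ((G.cliqueFinset 3).card : ℝ) ≥
        (1 / 3) * (∑ i : Fin N, (G.degree i : ℝ) ^ 2
          - (G.edgeFinset.card : ℝ) * ((N : ℝ) + 1)) ∧
      ((G.cliqueFinset 3).card : ℝ) ≥
        (1 / 3) * (4 * (G.edgeFinset.card : ℝ) ^ 2 / (N : ℝ)
          - (G.edgeFinset.card : ℝ) * ((N : ℝ) + 1)) := by
  have hsq := G.sum_degree_sq_le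
  have hcs := G.four_mul_card_edgeFinset_sq_le
  rw [Fintype.card_fin] at hsq hcs
  have hsq' : ∑ i, (G.degree i : ℝ) ^ 2 ≤ 3 * #(G.cliqueFinset 3) + N * #G.edgeFinset :=
    mod_cast hsq
  -- `div_le_of_le_mul₀` also covers `N = 0`, where the junk value `4|A|² / 0 = 0` is taken.
  have hcs' : 4 * (#G.edgeFinset : ℝ) ^ 2 / N ≤ ∑ i, (G.degree i : ℝ) ^ 2 :=
    div_le_of_le_mul₀ N.cast_nonneg (by positivity) (by exact_mod_cast hcs.trans_eq (mul_comm _ _))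
  have hE : (0 : ℝ) ≤ #G.edgeFinset := Nat.cast_nonneg _
  constructor <;> linarith
end
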